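/- Let a bicategory have bicategorical coinserters and bicategorical coinverters. Then it has bicategorical coequalizers: the bicategorical coequalizer of f, g : A ⇉ B is obtained by first forming the bicategorical coinserter (p : B → C, α : p∘f → p∘g) of f, g, and then forming the bicategorical coinverter of the 2-cell α. -/

import Mathlib

open CategoryTheory Bicategory

universe w v u

variable {B : Type u} [Bicategory.{w, v} B]

/-- `(p, α)` is a bicategorical coinserter of `f, g : a ⟶ b`. -/
def IsBicatCoinserter {a b c : B} (f g : a ⟶ b) (p : b ⟶ c) (α : f ≫ p ⟶ g ≫ p) : Prop :=
  ∀ t : B,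
    (∀ (q : b ⟶ t) (β : f ≫ q ⟶ g ≫ q),
      ∃ (k : c ⟶ t) (e : p ≫ k ≅ q),
        β = f ◁ e.inv ≫ (α_ f p k).inv ≫ α ▷ k ≫ (α_ g p k).hom ≫ g ◁ e.hom) ∧
    (∀ (k l : c ⟶ t) (θ : p ≫ k ⟶ p ≫ l),
      ((α_ f p k).inv ≫ α ▷ k ≫ (α_ g p k).hom) ≫ g ◁ θ =
        f ◁ θ ≫ ((α_ f p l).inv ≫ α ▷ l ≫ (α_ g p l).hom) →
      ∃! π : k ⟶ l, p ◁ π = θ)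

/-- `p` is a bicategorical coinverter of the 2-cell `η : f ⟶ g`. -/
def IsBicatCoinverter {a b c : B} {f g : a ⟶ b} (η : f ⟶ g) (p : b ⟶ c) : Prop :=
  IsIso (η ▷ p) ∧
  ∀ t : B,
    (∀ r : b ⟶ t, IsIso (η ▷ r) → ∃ k : c ⟶ t, Nonempty (p ≫ k ≅ r)) ∧
    (∀ (k l : c ⟶ t) (θ : p ≫ k ⟶ p ≫ l), ∃! π : k ⟶ l, p ◁ π = θ)

/-- `(p, w)` is a bicategorical coequalizer of `f, g : a ⟶ b`. -/
def IsBicatCoequalizer {a b c : B} (f g : a ⟶ b) (p : b ⟶ c) (w : f ≫ p ≅ g ≫ p) : Prop :=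
  ∀ t : B,
    (∀ (q : b ⟶ t) (β : f ≫ q ≅ g ≫ q),
      ∃ (k : c ⟶ t) (e : p ≫ k ≅ q),
        β.hom = f ◁ e.inv ≫ (α_ f p k).inv ≫ w.hom ▷ k ≫ (α_ g p k).hom ≫ g ◁ e.hom) ∧
    (∀ (k l : c ⟶ t) (θ : p ≫ k ⟶ p ≫ l),
      ((α_ f p k).inv ≫ w.hom ▷ k ≫ (α_ g p k).hom) ≫ g ◁ θ =
        f ◁ θ ≫ ((α_ f p l).inv ≫ w.hom ▷ l ≫ (α_ g p l).hom) →
      ∃! π : k ⟶ l, p ◁ π = θ)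

/-!
Given `(q, β)` with `β` invertible, the coinserter factors `q` as `p ≫ k₁` up to iso, and `β`
becomes a conjugate of `α ▷ k₁`; so `k₁` inverts `α` and factors through the coinverter `r`.
On 2-cells, the compatibility condition with respect to `α ▷ r` turns into the coinserter
condition for the reassociated 2-cell, which lifts uniquely along `p ◁ -`; and `r ◁ -` is
bijective on 2-cells, so the lifts along `(p ≫ r) ◁ -` exist and are unique.
-/

namespace CategoryTheory.Bicategory

variable {a b c d t : B} {f g : a ⟶ b} {p : b ⟶ c}

def assocWhiskerRight (α : f ≫ p ⟶ g ≫ p) (k : c ⟶ t) : f ≫ p ≫ k ⟶ g ≫ p ≫ k :=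
  (α_ f p k).inv ≫ α ▷ k ≫ (α_ g p k).hom

instance (α : f ≫ p ⟶ g ≫ p) (k : c ⟶ t) [IsIso (α ▷ k)] :
    IsIso (assocWhiskerRight α k) := by
  unfold assocWhiskerRight
  infer_instance

lemma assocWhiskerRight_assocWhiskerRight (α : f ≫ p ⟶ g ≫ p) (r : c ⟶ d) (k : d ⟶ t) :
    assocWhiskerRight (assocWhiskerRight α r) k =
      f ◁ (α_ p r k).hom ≫ assocWhiskerRight α (r ≫ k) ≫ g ◁ (α_ p r k).inv := by
  simp only [assocWhiskerRight]
  bicategory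

lemma assocWhiskerRight_eq_of_iso (α : f ≫ p ⟶ g ≫ p) {k k' : c ⟶ t} (φ : k ≅ k') :
    assocWhiskerRight α k' = f ◁ p ◁ φ.inv ≫ assocWhiskerRight α k ≫ g ◁ p ◁ φ.hom := by
  have hα : α ▷ k' = (f ≫ p) ◁ φ.inv ≫ α ▷ k ≫ (g ≫ p) ◁ φ.hom := by
    rw [← whisker_exchange]
    simp
  simp only [assocWhiskerRight, hα]
  bicategory

lemma isIso_whiskerRight_of_eq_conj (α : f ≫ p ⟶ g ≫ p) {k : c ⟶ t} {q : b ⟶ t}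
    (e : p ≫ k ≅ q) (β : f ≫ q ⟶ g ≫ q) [IsIso β]
    (hβ : β = f ◁ e.inv ≫ assocWhiskerRight α k ≫ g ◁ e.hom) : IsIso (α ▷ k) := by
  have : α ▷ k = (α_ f p k).hom ≫ f ◁ e.hom ≫ β ≫ g ◁ e.inv ≫ (α_ g p k).inv := by
    simp [hβ, assocWhiskerRight]
  rw [this]
  infer_instance

lemma existsUnique_comp_whiskerLeft {r : c ⟶ d} {k l : d ⟶ t}
    (θ : (p ≫ r) ≫ k ⟶ (p ≫ r) ≫ l)
    (hp : ∃! θ' : r ≫ k ⟶ r ≫ l, p ◁ θ' = (α_ p r k).inv ≫ θ ≫ (α_ p r l).hom)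
    (hr : ∀ θ' : r ≫ k ⟶ r ≫ l, ∃! π : k ⟶ l, r ◁ π = θ') :
    ∃! π : k ⟶ l, (p ≫ r) ◁ π = θ := by
  have key : ∀ π : k ⟶ l,
      (p ≫ r) ◁ π = θ ↔ p ◁ r ◁ π = (α_ p r k).inv ≫ θ ≫ (α_ p r l).hom := by
    intro π
    rw [comp_whiskerLeft, Iso.eq_inv_comp, ← Iso.comp_inv_eq, Category.assoc]
  obtain ⟨θ', hθ', hθ'_uniq⟩ := hp
  obtain ⟨π, hπ, hπ_uniq⟩ := hr θ'
  exact ⟨π, (key π).2 (hπ ▸ hθ'), fun π' hπ' => hπ_uniq π' (hθ'_uniq _ ((key π').1 hπ'))⟩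

end CategoryTheory.Bicategory

section

variable {a b c d t : B} {f g : a ⟶ b} {p : b ⟶ c} {α : f ≫ p ⟶ g ≫ p} {r : c ⟶ d}

lemma IsBicatCoinserter.exists_iso_of_isBicatCoinverter (hins : IsBicatCoinserter f g p α)
    (hinv : IsBicatCoinverter α r) (q : b ⟶ t) (β : f ≫ q ≅ g ≫ q) :
    ∃ (k : d ⟶ t) (e : (p ≫ r) ≫ k ≅ q),
      β.hom = f ◁ e.inv ≫ assocWhiskerRight (assocWhiskerRight α r) k ≫ g ◁ e.hom := by
  obtain ⟨k₁, e₁, hβ⟩ := (hins t).1 q β.hom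
  replace hβ : β.hom = f ◁ e₁.inv ≫ assocWhiskerRight α k₁ ≫ g ◁ e₁.hom := by
    simpa only [assocWhiskerRight, Category.assoc] using hβ
  obtain ⟨k, ⟨φ⟩⟩ := (hinv.2 t).1 k₁ (isIso_whiskerRight_of_eq_conj α e₁ β.hom hβ)
  refine ⟨k, α_ p r k ≪≫ whiskerLeftIso p φ ≪≫ e₁, ?_⟩
  rw [hβ, assocWhiskerRight_assocWhiskerRight, assocWhiskerRight_eq_of_iso α φ]
  simp

lemma IsBicatCoinserter.existsUnique_whiskerLeft_of_isBicatCoinverter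
    (hins : IsBicatCoinserter f g p α) (hinv : IsBicatCoinverter α r) (k l : d ⟶ t)
    (θ : (p ≫ r) ≫ k ⟶ (p ≫ r) ≫ l)
    (hθ : assocWhiskerRight (assocWhiskerRight α r) k ≫ g ◁ θ =
      f ◁ θ ≫ assocWhiskerRight (assocWhiskerRight α r) l) :
    ∃! π : k ⟶ l, (p ≫ r) ◁ π = θ := by
  refine existsUnique_comp_whiskerLeft θ ((hins t).2 _ _ _ ?_) ((hinv.2 t).2 k l)
  change assocWhiskerRight α (r ≫ k) ≫ _ = _ ≫ assocWhiskerRight α (r ≫ l)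
  rw [assocWhiskerRight_assocWhiskerRight, assocWhiskerRight_assocWhiskerRight] at hθ
  simpa using congrArg (fun x => f ◁ (α_ p r k).inv ≫ x ≫ g ◁ (α_ p r l).hom) hθ

end

/-- coequalizers from coinserters followed by coinverters. -/
theorem bicat_coequalizer_of_coinserter_and_coinverter
    {a b c d : B} (f g : a ⟶ b) (p : b ⟶ c) (α : f ≫ p ⟶ g ≫ p)
    (hins : IsBicatCoinserter f g p α) (r : c ⟶ d)
    (hinv : IsBicatCoinverter α r) :
    ∃ w : f ≫ (p ≫ r) ≅ g ≫ (p ≫ r), IsBicatCoequalizer f g (p ≫ r) w := by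
  have : IsIso (α ▷ r) := hinv.1
  refine ⟨asIso (assocWhiskerRight α r), fun t => ⟨fun q β => ?_, fun k l θ hθ => ?_⟩⟩
  · obtain ⟨k, e, hβ⟩ := hins.exists_iso_of_isBicatCoinverter hinv q β
    refine ⟨k, e, ?_⟩
    simpa only [assocWhiskerRight, Category.assoc, asIso_hom] using hβ
  · exact hins.existsUnique_whiskerLeft_of_isBicatCoinverter hinv k l θ hθ
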